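/- Let (W_n)_{n≥0} be an odometer based construction sequence with limit K which has the small word property with respect to a sequence (δ_n)_{n≥0} of reals with 0 < δ_n < 1 for all n (i.e. f_n < δ_n for all n). Then for every shift-invariant Borel probability measure ρ on K, every n, every w ∈ W_n and every w' ∈ W_{n+1}: ρ(⟨w'⟩) < δ_{n+1}/K_{n+1} < ρ(⟨w⟩). -/

import Mathlib

/-!
Shift invariance turns the combinatorics of the words into two identities for the numbers
`ρ⟨v⟩`. Every point of the limit lies in exactly one shifted cylinder `shiftZ (-p) ⁻¹' ⟨v⟩`
with `v ∈ W m` and `0 ≤ p < K_m` (unique readability makes the parsing unique), and each of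
these sets has measure `ρ⟨v⟩`; hence `K_m * ∑_{v ∈ W m} ρ⟨v⟩ = 1`. Likewise, for `w ∈ W n`
the cylinder `⟨w⟩` is the disjoint union of the shifted cylinders of the `v ∈ W (n+1)` over the
occurrences `p` of `w` in `v`, so `ρ⟨w⟩ = ∑_v occCount w v * ρ⟨v⟩`. Since every `n`-word occurs
in every `(n+1)`-word, `ρ⟨w⟩ ≥ 1/K_{n+1} > δ_{n+1}/K_{n+1}`; since the small word property gives
`occCount w' v < δ_{n+1} K_{n+2}/K_{n+1}`, `ρ⟨w'⟩ < δ_{n+1}/K_{n+1}`.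
-/

open MeasureTheory

namespace OdoPaper

/-- The shift map `sh` on bi-infinite sequences: `(sh x)(n) = x(n+1)`. -/
def shift {σ : Type*} (x : ℤ → σ) : ℤ → σ := fun m => x (m + 1)

/-- The `n`-th iterate (`n : ℤ`) of the shift map: `(shiftZ n x)(m) = x(m+n)`. -/
def shiftZ {σ : Type*} (n : ℤ) (x : ℤ → σ) : ℤ → σ := fun m => x (m + n)

/-- `Kseq k n = K_n`, where `K_0 = 1` and `K_{n+1} = K_n * k_n`. -/
def Kseq (k : ℕ → ℕ) : ℕ → ℕ
  | 0 => 1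
  | n + 1 => Kseq k n * k n

/-- `w` occurs as a contiguous subword of `l` starting at position `p`. -/
def occursAt {σ : Type*} (w l : List σ) (p : ℕ) : Prop :=
  p + w.length ≤ l.length ∧ (l.drop p).take w.length = w

/-- The finite contiguous subword `x↾[a, a+m)` of `x : ℤ → σ`. -/
def subwordAt {σ : Type*} (x : ℤ → σ) (a : ℤ) (m : ℕ) : List σ :=
  List.ofFn (fun i : Fin m => x (a + i))

/-- The limit `K` of a construction sequence: all bi-infinite sequences each of whose finite
contiguous subwords occurs as a contiguous subword of some word in some `W n`. -/
def CSLimit {σ : Type*} (W : ℕ → Set (List σ)) : Set (ℤ → σ) :=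
  { x | ∀ (a : ℤ) (m : ℕ), ∃ n, ∃ w ∈ W n, ∃ p, occursAt (subwordAt x a m) w p }

/-- `(W_n)` is an odometer based construction sequence over the finite alphabet `σ` with
coefficient sequence `k`:  `W 0` consists of the one-letter words; every word of `W n` has
length `K_n`; every word of `W (n+1)` is a concatenation of `k n` words from `W n`; each
`W n` is uniquely readable; and every `n`-word occurs in every `(n+1)`-word. -/
structure OdometerBasedCS (σ : Type*) [Fintype σ] (k : ℕ → ℕ) (W : ℕ → Set (List σ)) :
    Prop where
  two_le : ∀ n, 2 ≤ k n
  w_zero : W 0 = { l : List σ | ∃ a : σ, l = [a] }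
  nonempty : ∀ n, (W n).Nonempty
  finite : ∀ n, (W n).Finite
  length_eq : ∀ n, ∀ w ∈ W n, w.length = Kseq k n
  concat : ∀ n, ∀ w' ∈ W (n + 1),
    ∃ g : Fin (k n) → List σ, (∀ i, g i ∈ W n) ∧ w' = (List.ofFn g).flatten
  unique_readable : ∀ n, ∀ u ∈ W n, ∀ v ∈ W n, ∀ w ∈ W n, ∀ p,
    occursAt w (u ++ v) p → p = 0 ∨ p = Kseq k n
  subword : ∀ n, ∀ w ∈ W n, ∀ w' ∈ W (n + 1), ∃ p, occursAt w w' p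

/-- The number of occurrences of `w` as a contiguous subword of `l`. -/
noncomputable def occCount {σ : Type*} (w l : List σ) : ℕ :=
  Nat.card { p : ℕ // occursAt w l p }

/-- `Freq k n m w w'` : the number of occurrences of the `n`-word `w` in the `m`-word `w'`
divided by `K_m / K_n`. -/
noncomputable def Freq {σ : Type*} (k : ℕ → ℕ) (n m : ℕ) (w w' : List σ) : ℝ :=
  (occCount w w' : ℝ) / ((Kseq k m : ℝ) / (Kseq k n : ℝ))

/-- `f_n` : the maximal frequency of `n`-words in `(n+1)`-words. -/
noncomputable def maxFreq {σ : Type*} (k : ℕ → ℕ) (W : ℕ → Set (List σ)) (n : ℕ) : ℝ :=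
  sSup { r : ℝ | ∃ w ∈ W n, ∃ w' ∈ W (n + 1), r = Freq k n (n + 1) w w' }

/-- The cylinder `⟨w⟩` determined by an `n`-word `w`: those `x` in the limit `K` whose
parsing into `n`-words has offset `a = 0` and whose principal `n`-subword `x↾[0,K_n)` is `w`. -/
def cylinder {σ : Type*} (W : ℕ → Set (List σ)) (k : ℕ → ℕ) (n : ℕ) (w : List σ) :
    Set (ℤ → σ) :=
  { x | x ∈ CSLimit W ∧ (∀ j : ℤ, subwordAt x (j * (Kseq k n : ℤ)) (Kseq k n) ∈ W n) ∧
        subwordAt x 0 (Kseq k n) = w }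

lemma sum_mul_lt_mul_sum {ι : Type*} {s : Finset ι} {f g : ι → ℝ} {C : ℝ}
    (hf : ∀ i ∈ s, f i < C) (hg : ∀ i ∈ s, 0 ≤ g i) (hpos : 0 < ∑ i ∈ s, g i) :
    ∑ i ∈ s, f i * g i < C * ∑ i ∈ s, g i := by
  obtain ⟨i, hi, hgi⟩ := Finset.exists_lt_of_sum_lt (f := fun _ => 0) (g := g) (by simpa using hpos)
  rw [Finset.mul_sum]
  exact Finset.sum_lt_sum (fun j hj => mul_le_mul_of_nonneg_right (hf j hj).le (hg j hj))
    ⟨i, hi, mul_lt_mul_of_pos_right (hf i hi) hgi⟩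

section Words
variable {σ : Type*}

@[simp] lemma subwordAt_length (x : ℤ → σ) (a : ℤ) (m : ℕ) : (subwordAt x a m).length = m := by
  simp [subwordAt]

lemma subwordAt_shiftZ (t : ℤ) (x : ℤ → σ) (a : ℤ) (m : ℕ) :
    subwordAt (shiftZ t x) a m = subwordAt x (a + t) m := by
  simp only [subwordAt, shiftZ, add_right_comm]

lemma take_subwordAt (x : ℤ → σ) (a : ℤ) {m q : ℕ} (h : q ≤ m) :
    (subwordAt x a m).take q = subwordAt x a q := by
  apply List.ext_getElem (by simp [h])
  intro i _ _
  simp [subwordAt]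

lemma drop_subwordAt (x : ℤ → σ) (a : ℤ) (m p : ℕ) :
    (subwordAt x a m).drop p = subwordAt x (a + p) (m - p) := by
  apply List.ext_getElem (by simp)
  intro i _ _
  simp [subwordAt, add_assoc]

lemma subwordAt_add (x : ℤ → σ) (a : ℤ) (m₁ m₂ : ℕ) :
    subwordAt x a (m₁ + m₂) = subwordAt x a m₁ ++ subwordAt x (a + m₁) m₂ := by
  rw [← List.take_append_drop m₁ (subwordAt x a (m₁ + m₂)), take_subwordAt _ _ (by omega),
    drop_subwordAt, Nat.add_sub_cancel_left]

lemma occursAt_subwordAt_iff (x : ℤ → σ) (a : ℤ) (m : ℕ) (w : List σ) (p : ℕ) :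
    occursAt w (subwordAt x a m) p ↔ p + w.length ≤ m ∧ subwordAt x (a + p) w.length = w := by
  unfold occursAt
  rw [subwordAt_length, drop_subwordAt]
  refine and_congr_right fun h => ?_
  rw [take_subwordAt _ _ (by omega)]

lemma occursAt_self (w : List σ) : occursAt w w 0 := by
  simp [occursAt]

lemma take_drop_mul_flatten {L : List (List σ)} {K : ℕ} (hL : ∀ u ∈ L, u.length = K)
    {t : ℕ} (ht : t < L.length) : (L.flatten.drop (t * K)).take K = L[t] := by
  have hsum : ((L.map List.length).take t).sum = t * K := by
    rw [List.map_congr_left hL, List.map_const', List.take_replicate, List.sum_replicate,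
      smul_eq_mul, min_eq_left ht.le]
  rw [← hsum, List.drop_sum_flatten, List.drop_eq_getElem_cons ht, List.flatten_cons,
    List.take_left' (hL _ (List.getElem_mem ht))]

lemma length_flatten_of_forall_length_eq {L : List (List σ)} {K : ℕ}
    (hL : ∀ u ∈ L, u.length = K) : L.flatten.length = L.length * K := by
  rw [List.length_flatten, List.map_congr_left hL, List.map_const', List.sum_replicate,
    smul_eq_mul]

lemma shift_iterate (p : ℕ) : (shift : (ℤ → σ) → ℤ → σ)^[p] = shiftZ p := by
  induction p with
  | zero => funext x m; simp [shiftZ]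
  | succ p ih =>
    rw [Function.iterate_succ', ih]
    funext x m
    simp only [Function.comp_apply, shift, shiftZ]
    push_cast
    ring_nf

open Classical in
lemma occCount_eq_card_filter {w : List σ} (hw : 0 < w.length) (l : List σ) :
    occCount w l = ((Finset.range l.length).filter (occursAt w l)).card := by
  rw [occCount, ← Nat.card_eq_finsetCard]
  refine Nat.card_congr (Equiv.subtypeEquivRight fun p => ?_)
  simp only [Finset.mem_filter, Finset.mem_range, iff_and_self]
  exact fun h => by have := h.1; omega

lemma occCount_pos {w l : List σ} (hw : 0 < w.length) {p : ℕ} (h : occursAt w l p) :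
    0 < occCount w l := by
  classical
  rw [occCount_eq_card_filter hw]
  have := h.1
  exact Finset.card_pos.mpr ⟨p, Finset.mem_filter.mpr ⟨Finset.mem_range.mpr (by omega), h⟩⟩

end Words

section Kseq
variable {k : ℕ → ℕ}

lemma Kseq_pos (hk : ∀ n, 2 ≤ k n) (n : ℕ) : 0 < Kseq k n := by
  induction n with
  | zero => simp [Kseq]
  | succ n ih => exact Nat.mul_pos ih (by linarith [hk n])

lemma Kseq_strictMono (hk : ∀ n, 2 ≤ k n) : StrictMono (Kseq k) :=
  strictMono_nat_of_lt_succ fun n =>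
    (Nat.lt_mul_iff_one_lt_right (Kseq_pos hk n)).mpr (by linarith [hk n])

end Kseq

namespace OdometerBasedCS
variable {σ : Type*} [Fintype σ] {k : ℕ → ℕ} {W : ℕ → Set (List σ)}

lemma exists_flatten_eq (hW : OdometerBasedCS σ k W) {n N : ℕ} (hnN : n ≤ N) {w : List σ}
    (hw : w ∈ W N) : ∃ L : List (List σ), (∀ u ∈ L, u ∈ W n) ∧ w = L.flatten := by
  induction N, hnN using Nat.le_induction generalizing w with
  | base => exact ⟨[w], by simpa using hw, by simp⟩
  | succ N _ ih =>
    obtain ⟨g, hg, rfl⟩ := hW.concat N w hw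
    choose L hL hLg using fun i => ih (hg i)
    refine ⟨(List.ofFn L).flatten, ?_, ?_⟩
    · simp only [List.mem_flatten, List.mem_ofFn]
      rintro u ⟨_, ⟨i, rfl⟩, hu⟩
      exact hL i u hu
    · rw [List.flatten_flatten, List.map_ofFn]
      exact congrArg _ (congrArg List.ofFn (funext hLg))

lemma take_drop_mem (hW : OdometerBasedCS σ k W) {n N : ℕ} (hnN : n ≤ N) {w : List σ}
    (hw : w ∈ W N) {i : ℕ} (hdvd : Kseq k n ∣ i) (hi : i + Kseq k n ≤ Kseq k N) :
    (w.drop i).take (Kseq k n) ∈ W n := by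
  obtain ⟨L, hL, rfl⟩ := hW.exists_flatten_eq hnN hw
  have hlen : ∀ u ∈ L, u.length = Kseq k n := fun u hu => hW.length_eq n u (hL u hu)
  obtain ⟨t, rfl⟩ := hdvd
  have ht : t < L.length := by
    have := hW.length_eq N _ hw
    rw [length_flatten_of_forall_length_eq hlen] at this
    nlinarith [Kseq_pos hW.two_le n]
  rw [mul_comm, take_drop_mul_flatten hlen ht]
  exact hL _ (List.getElem_mem ht)

lemma subwordAt_mem_of_occursAt (hW : OdometerBasedCS σ k W) {n N : ℕ} (hnN : n ≤ N)
    {w : List σ} (hw : w ∈ W N) {x : ℤ → σ} {s : ℤ} {M p : ℕ}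
    (hocc : occursAt (subwordAt x s M) w p) {i : ℕ} (hdvd : Kseq k n ∣ p + i)
    (hi : i + Kseq k n ≤ M) : subwordAt x (s + i) (Kseq k n) ∈ W n := by
  obtain ⟨hlen, htake⟩ := hocc
  rw [subwordAt_length] at hlen htake
  have hsub : subwordAt x (s + i) (Kseq k n) = (w.drop (p + i)).take (Kseq k n) := by
    rw [← take_subwordAt _ _ (show Kseq k n ≤ M - i by omega), ← drop_subwordAt, ← htake,
      List.drop_take, List.take_take, List.drop_drop, min_eq_left (by omega)]
  rw [hsub]
  exact hW.take_drop_mem hnN hw hdvd (by rw [← hW.length_eq N w hw]; omega)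

lemma eq_or_eq_add_of_subwordAt_mem (hW : OdometerBasedCS σ k W) {n : ℕ} {x : ℤ → σ}
    {a b : ℤ} (hu : subwordAt x a (Kseq k n) ∈ W n)
    (hv : subwordAt x (a + Kseq k n) (Kseq k n) ∈ W n) (hw : subwordAt x b (Kseq k n) ∈ W n)
    (hab : a ≤ b) (hba : b ≤ a + Kseq k n) : b = a ∨ b = a + Kseq k n := by
  have hocc : occursAt (subwordAt x b (Kseq k n))
      (subwordAt x a (Kseq k n) ++ subwordAt x (a + Kseq k n) (Kseq k n)) (b - a).toNat := by
    rw [← subwordAt_add, occursAt_subwordAt_iff, subwordAt_length]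
    exact ⟨by omega, by congr 1; omega⟩
  rcases hW.unique_readable n _ hu _ hv _ hw _ hocc with h | h <;> omega

lemma Freq_le_maxFreq (hW : OdometerBasedCS σ k W) {n : ℕ} {w v : List σ} (hw : w ∈ W n)
    (hv : v ∈ W (n + 1)) : Freq k n (n + 1) w v ≤ maxFreq k W n := by
  refine le_csSup (Set.Finite.bddAbove ?_) ⟨w, hw, v, hv, rfl⟩
  refine (((hW.finite n).prod (hW.finite (n + 1))).image
    fun q => Freq k n (n + 1) q.1 q.2).subset ?_
  rintro r ⟨u, hu, u', hu', rfl⟩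
  exact ⟨(u, u'), ⟨hu, hu'⟩, rfl⟩

end OdometerBasedCS

section Parse
variable {σ : Type*} {k : ℕ → ℕ} {W : ℕ → Set (List σ)}

def Parse (W : ℕ → Set (List σ)) (k : ℕ → ℕ) (n : ℕ) (x : ℤ → σ) (a : ℤ) : Prop :=
  ∀ j : ℤ, subwordAt x (a + j * Kseq k n) (Kseq k n) ∈ W n

lemma Parse.mem {n : ℕ} {x : ℤ → σ} {a : ℤ} (h : Parse W k n x a) :
    subwordAt x a (Kseq k n) ∈ W n := by
  simpa using h 0

lemma Parse.of_dvd {n : ℕ} {x : ℤ → σ} {a b : ℤ} (h : Parse W k n x a)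
    (hdvd : (Kseq k n : ℤ) ∣ b - a) : Parse W k n x b := by
  obtain ⟨c, hc⟩ := hdvd
  intro j
  simpa [show a + (c + j) * Kseq k n = b + j * Kseq k n by linarith] using h (c + j)

lemma parse_shiftZ_iff {n : ℕ} {x : ℤ → σ} {t a : ℤ} :
    Parse W k n (shiftZ t x) a ↔ Parse W k n x (a + t) := by
  simp only [Parse, subwordAt_shiftZ, add_right_comm]

lemma mem_cylinder_iff {n : ℕ} {w : List σ} {x : ℤ → σ} :
    x ∈ cylinder W k n w ↔ x ∈ CSLimit W ∧ Parse W k n x 0 ∧ subwordAt x 0 (Kseq k n) = w := by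
  simp only [cylinder, Parse, zero_add, Set.mem_ofPred_eq]

lemma shiftZ_mem_CSLimit_iff {t : ℤ} {x : ℤ → σ} : shiftZ t x ∈ CSLimit W ↔ x ∈ CSLimit W := by
  refine ⟨fun h a m => ?_, fun h a m => ?_⟩
  · simpa [subwordAt_shiftZ] using h (a - t) m
  · simpa [subwordAt_shiftZ] using h (a + t) m

variable [Fintype σ]

lemma Parse.dvd_sub (hW : OdometerBasedCS σ k W) {n : ℕ} {x : ℤ → σ} {a b : ℤ}
    (ha : Parse W k n x a) (hb : subwordAt x b (Kseq k n) ∈ W n) :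
    (Kseq k n : ℤ) ∣ b - a := by
  have hK : (0 : ℤ) < Kseq k n := by exact_mod_cast Kseq_pos hW.two_le n
  set c := a + (b - a) / Kseq k n * Kseq k n
  have hbc : b = c + (b - a) % Kseq k n := by
    linarith [Int.emod_add_mul_ediv (b - a) (Kseq k n)]
  have hr := Int.emod_lt_of_pos (b - a) hK
  have hr₀ := Int.emod_nonneg (b - a) hK.ne'
  have hv : subwordAt x (c + Kseq k n) (Kseq k n) ∈ W n := by
    simpa [c, add_assoc, add_mul] using ha ((b - a) / Kseq k n + 1)
  rcases hW.eq_or_eq_add_of_subwordAt_mem (ha _) hv hb (by omega) (by omega) with h | h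
  · exact Int.dvd_of_emod_eq_zero (by omega)
  · omega

lemma Parse.of_succ (hW : OdometerBasedCS σ k W) {n : ℕ} {x : ℤ → σ} {a : ℤ}
    (h : Parse W k (n + 1) x a) : Parse W k n x a := by
  intro j
  have hk : (0 : ℤ) < k n := by exact_mod_cast (show 0 < k n by linarith [hW.two_le n])
  obtain ⟨q, r, hr, rfl⟩ : ∃ (q : ℤ) (r : ℕ), r < k n ∧ j = q * k n + r := by
    refine ⟨j / k n, (j % k n).toNat, by have := Int.emod_lt_of_pos j hk; omega, ?_⟩
    rw [Int.toNat_of_nonneg (Int.emod_nonneg j hk.ne')]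
    linarith [Int.emod_add_mul_ediv j (k n)]
  have hpos : a + (q * k n + r) * Kseq k n = a + q * Kseq k (n + 1) + (r * Kseq k n : ℕ) := by
    push_cast [Kseq]
    ring
  rw [hpos]
  refine hW.subwordAt_mem_of_occursAt n.le_succ (h q) (occursAt_self _)
    (by simp only [zero_add, dvd_mul_left]) ?_
  calc r * Kseq k n + Kseq k n = (r + 1) * Kseq k n := by ring
    _ ≤ k n * Kseq k n := Nat.mul_le_mul_right _ hr
    _ = Kseq k (n + 1) := mul_comm _ _

namespace OdometerBasedCS

lemma exists_offset_blocks (hW : OdometerBasedCS σ k W) (n : ℕ) {x : ℤ → σ}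
    (hx : x ∈ CSLimit W) (R : ℕ) : ∃ a : ℤ, -(Kseq k n : ℤ) < a ∧ a ≤ 0 ∧
      ∀ j : ℤ, -(R : ℤ) ≤ j → j < R → subwordAt x (a + j * Kseq k n) (Kseq k n) ∈ W n := by
  set K := Kseq k n
  have hK : (0 : ℤ) < K := by exact_mod_cast Kseq_pos hW.two_le n
  set s : ℤ := -((R + 1) * K)
  -- a window around the origin sits inside some `N`-word, whose aligned `n`-blocks are `n`-words
  obtain ⟨N, w, hw, p, hocc⟩ := hx s (2 * (R + 1) * K)
  have hnN : n ≤ N := by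
    have := hocc.1
    rw [subwordAt_length, hW.length_eq N w hw] at this
    by_contra! hNn
    have := Kseq_strictMono hW.two_le hNn
    nlinarith
  have hm₀ := Int.emod_nonneg (p - s) hK.ne'
  have hm₁ := Int.emod_lt_of_pos (p - s) hK
  refine ⟨-((p - s) % K), by omega, by omega, fun j hj₁ hj₂ => ?_⟩
  have hlo : -(R : ℤ) * K ≤ j * K := by nlinarith
  have hhi : j * K + K ≤ R * K := by nlinarith
  obtain ⟨i, hi⟩ : ∃ i : ℕ, (i : ℤ) = -((p - s) % K) + j * K - s :=
    ⟨_, Int.toNat_of_nonneg (by linarith)⟩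
  rw [show -((p - s) % K) + j * K = s + i by omega]
  refine hW.subwordAt_mem_of_occursAt hnN hw hocc
    (Int.natCast_dvd_natCast.mp ⟨(p - s) / K + j, ?_⟩) ?_
  · push_cast
    linarith [Int.emod_add_mul_ediv (p - s) K]
  · zify
    linarith

lemma exists_parse (hW : OdometerBasedCS σ k W) (n : ℕ) {x : ℤ → σ} (hx : x ∈ CSLimit W) :
    ∃ a : ℤ, Parse W k n x a := by
  obtain ⟨a, ha₁, ha₂, ha⟩ := hW.exists_offset_blocks n hx 2
  refine ⟨a, fun j => ?_⟩
  obtain ⟨b, hb₁, hb₂, hb⟩ := hW.exists_offset_blocks n hx (j.natAbs + 2)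
  have hu : subwordAt x a (Kseq k n) ∈ W n := by simpa using ha 0 (by omega) (by omega)
  have hv : subwordAt x (a + Kseq k n) (Kseq k n) ∈ W n := by
    simpa using ha 1 (by omega) (by omega)
  have hu' : subwordAt x b (Kseq k n) ∈ W n := by simpa using hb 0 (by omega) (by omega)
  have hv' : subwordAt x (b + Kseq k n) (Kseq k n) ∈ W n := by
    simpa using hb 1 (by omega) (by omega)
  have hab : b = a := by
    rcases le_total a b with h | h
    · rcases hW.eq_or_eq_add_of_subwordAt_mem hu hv hu' h (by omega) with h' | h' <;> omega
    · rcases hW.eq_or_eq_add_of_subwordAt_mem hu' hv' hu h (by omega) with h' | h' <;> omega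
  exact hab ▸ hb j (by omega) (by omega)

end OdometerBasedCS

end Parse

section Measure
variable {σ : Type*} [MeasurableSpace σ] {k : ℕ → ℕ} {W : ℕ → Set (List σ)}

lemma measurable_shiftZ (t : ℤ) : Measurable (shiftZ t : (ℤ → σ) → ℤ → σ) :=
  measurable_pi_lambda _ fun _ => measurable_pi_apply _

lemma measurable_shift : Measurable (shift : (ℤ → σ) → ℤ → σ) :=
  measurable_pi_lambda _ fun _ => measurable_pi_apply _

lemma measure_preimage_shiftZ_neg {ρ : Measure (ℤ → σ)} (hinv : ρ.map shift = ρ) (p : ℕ)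
    {S : Set (ℤ → σ)} (hS : MeasurableSet S) : ρ (shiftZ (-(p : ℤ)) ⁻¹' S) = ρ S := by
  have hmp : MeasurePreserving shift ρ ρ := ⟨measurable_shift, hinv⟩
  have := (hmp.iterate p).measure_preimage (s := shiftZ (-(p : ℤ)) ⁻¹' S)
    (measurable_shiftZ _ hS).nullMeasurableSet
  rwa [shift_iterate, ← Set.preimage_comp,
    show shiftZ (-(p : ℤ)) ∘ shiftZ (p : ℤ) = (id : (ℤ → σ) → ℤ → σ) by
      funext x m; simp [shiftZ], Set.preimage_id, eq_comm] at this

variable [DiscreteMeasurableSpace σ] [Countable σ]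

lemma measurableSet_subwordAt_mem (a : ℤ) (m : ℕ) (S : Set (List σ)) :
    MeasurableSet {x : ℤ → σ | subwordAt x a m ∈ S} :=
  show MeasurableSet ((fun (x : ℤ → σ) (i : Fin m) => x (a + i)) ⁻¹' {g | List.ofFn g ∈ S}) from
    (measurable_pi_lambda _ fun _ => measurable_pi_apply _) MeasurableSet.of_discrete

lemma measurableSet_CSLimit : MeasurableSet (CSLimit W) := by
  simp only [CSLimit, Set.ofPred_forall]
  exact MeasurableSet.iInter fun a => MeasurableSet.iInter fun m =>
    measurableSet_subwordAt_mem a m {l | ∃ n, ∃ w ∈ W n, ∃ p, occursAt l w p}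

lemma measurableSet_cylinder (n : ℕ) (w : List σ) : MeasurableSet (cylinder W k n w) := by
  simp only [cylinder, Set.ofPred_and, Set.ofPred_forall, Set.ofPred_mem_eq]
  exact measurableSet_CSLimit.inter
    ((MeasurableSet.iInter fun j => measurableSet_subwordAt_mem _ _ _) |>.inter
      (measurableSet_subwordAt_mem 0 _ {w}))

end Measure

section Partition
variable {σ : Type*} {k : ℕ → ℕ} {W : ℕ → Set (List σ)}

def shiftedCylinder (W : ℕ → Set (List σ)) (k : ℕ → ℕ) (m : ℕ) (v : List σ) (p : ℕ) :
    Set (ℤ → σ) :=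
  shiftZ (-(p : ℤ)) ⁻¹' cylinder W k m v

lemma mem_shiftedCylinder_iff {m : ℕ} {v : List σ} {p : ℕ} {x : ℤ → σ} :
    x ∈ shiftedCylinder W k m v p ↔
      x ∈ CSLimit W ∧ Parse W k m x (-p) ∧ subwordAt x (-p) (Kseq k m) = v := by
  simp only [shiftedCylinder, Set.mem_preimage, mem_cylinder_iff, shiftZ_mem_CSLimit_iff,
    parse_shiftZ_iff, subwordAt_shiftZ, zero_add]

lemma shiftedCylinder_subset_CSLimit (m : ℕ) (v : List σ) (p : ℕ) :
    shiftedCylinder W k m v p ⊆ CSLimit W :=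
  fun _ hx => (mem_shiftedCylinder_iff.mp hx).1

namespace OdometerBasedCS
variable [Fintype σ]

lemma pairwiseDisjoint_shiftedCylinder (hW : OdometerBasedCS σ k W) (m : ℕ) :
    {q : List σ × ℕ | q.2 < Kseq k m}.PairwiseDisjoint
      fun q => shiftedCylinder W k m q.1 q.2 := by
  rintro ⟨v₁, p₁⟩ hp₁ ⟨v₂, p₂⟩ hp₂ hne
  refine Set.disjoint_left.mpr fun x hx₁ hx₂ => hne ?_
  simp only [Set.mem_ofPred_eq] at hp₁ hp₂ hx₁ hx₂
  obtain ⟨-, hP₁, rfl⟩ := mem_shiftedCylinder_iff.mp hx₁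
  obtain ⟨-, hP₂, rfl⟩ := mem_shiftedCylinder_iff.mp hx₂
  have hdvd := hP₁.dvd_sub hW hP₂.mem
  have : p₁ = p₂ := by
    have := Int.eq_zero_of_abs_lt_dvd hdvd (by rw [abs_lt]; omega)
    omega
  rw [this]

lemma CSLimit_subset_iUnion_shiftedCylinder (hW : OdometerBasedCS σ k W) (m : ℕ) :
    CSLimit W ⊆ ⋃ q ∈ (hW.finite m).toFinset ×ˢ Finset.range (Kseq k m),
      shiftedCylinder W k m q.1 q.2 := by
  intro x hx
  obtain ⟨a, ha⟩ := hW.exists_parse m hx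
  have hK : (0 : ℤ) < Kseq k m := by exact_mod_cast Kseq_pos hW.two_le m
  obtain ⟨p, hp, hP⟩ : ∃ p : ℕ, p < Kseq k m ∧ Parse W k m x (-p) := by
    refine ⟨((-a) % Kseq k m).toNat, by have := Int.emod_lt_of_pos (-a) hK; omega,
      ha.of_dvd ⟨(-a) / Kseq k m, ?_⟩⟩
    rw [Int.toNat_of_nonneg (Int.emod_nonneg _ hK.ne')]
    linarith [Int.emod_add_mul_ediv (-a) (Kseq k m)]
  refine Set.mem_iUnion₂.mpr ⟨(subwordAt x (-p) (Kseq k m), p), ?_,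
    mem_shiftedCylinder_iff.mpr ⟨hx, hP, rfl⟩⟩
  simp only [Finset.mem_product, Set.Finite.mem_toFinset, Finset.mem_range]
  exact ⟨hP.mem, hp⟩

open Classical in
lemma shiftedCylinder_inter_cylinder (hW : OdometerBasedCS σ k W) {n : ℕ} {w v : List σ}
    (hw : w ∈ W n) {p : ℕ} (hp : p < Kseq k (n + 1)) :
    shiftedCylinder W k (n + 1) v p ∩ cylinder W k n w =
      if occursAt w v p then shiftedCylinder W k (n + 1) v p else ∅ := by
  split_ifs with hocc
  · refine Set.inter_eq_left.mpr fun x hx => ?_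
    obtain ⟨hxK, hP, rfl⟩ := mem_shiftedCylinder_iff.mp hx
    rw [occursAt_subwordAt_iff, hW.length_eq n w hw, neg_add_cancel] at hocc
    have hPn := hP.of_succ hW
    exact mem_cylinder_iff.mpr ⟨hxK, hPn.of_dvd (hPn.dvd_sub hW (hocc.2 ▸ hw)), hocc.2⟩
  · refine Set.eq_empty_of_forall_notMem fun x ⟨hx, hxw⟩ => hocc ?_
    obtain ⟨-, hP, rfl⟩ := mem_shiftedCylinder_iff.mp hx
    obtain ⟨-, hP₀, rfl⟩ := mem_cylinder_iff.mp hxw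
    obtain ⟨c, rfl⟩ : Kseq k n ∣ p := by
      exact_mod_cast (by simpa using (hP.of_succ hW).dvd_sub hW hP₀.mem : (Kseq k n : ℤ) ∣ p)
    rw [occursAt_subwordAt_iff, subwordAt_length, neg_add_cancel]
    refine ⟨?_, rfl⟩
    have hc : c < k n := Nat.lt_of_mul_lt_mul_left hp
    calc Kseq k n * c + Kseq k n = Kseq k n * (c + 1) := by ring
      _ ≤ Kseq k n * k n := Nat.mul_le_mul_left _ hc
      _ = Kseq k (n + 1) := rfl

end OdometerBasedCS

end Partition

section Mass
variable {σ : Type*} [Fintype σ] [MeasurableSpace σ] [DiscreteMeasurableSpace σ]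
  {k : ℕ → ℕ} {W : ℕ → Set (List σ)} {ρ : Measure (ℤ → σ)}

lemma measureReal_shiftedCylinder (hinv : ρ.map shift = ρ) (m : ℕ) (v : List σ) (p : ℕ) :
    ρ.real (shiftedCylinder W k m v p) = ρ.real (cylinder W k m v) := by
  rw [Measure.real, Measure.real, shiftedCylinder,
    measure_preimage_shiftZ_neg hinv p (measurableSet_cylinder m v)]

namespace OdometerBasedCS

lemma measureReal_eq_sum_shiftedCylinder_inter (hW : OdometerBasedCS σ k W) [IsFiniteMeasure ρ]
    (m : ℕ) {S : Set (ℤ → σ)} (hS : MeasurableSet S) (hSK : S ⊆ CSLimit W) :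
    ρ.real S = ∑ v ∈ (hW.finite m).toFinset, ∑ p ∈ Finset.range (Kseq k m),
      ρ.real (shiftedCylinder W k m v p ∩ S) := by
  rw [← Finset.sum_product (f := fun q => ρ.real (shiftedCylinder W k m q.1 q.2 ∩ S)),
    ← measureReal_biUnion_finset, ← Set.iUnion₂_inter,
    Set.inter_eq_right.mpr (hSK.trans (hW.CSLimit_subset_iUnion_shiftedCylinder m))]
  · refine ((hW.pairwiseDisjoint_shiftedCylinder m).subset fun q hq => ?_).mono
      fun q => Set.inter_subset_left
    exact (Finset.mem_range.mp (Finset.mem_product.mp hq).2)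
  · exact fun q _ => (measurable_shiftZ _ (measurableSet_cylinder _ _)).inter hS

lemma sum_measureReal_cylinder (hW : OdometerBasedCS σ k W) [IsFiniteMeasure ρ]
    (hinv : ρ.map shift = ρ) (m : ℕ) :
    ∑ v ∈ (hW.finite m).toFinset, ρ.real (cylinder W k m v) = ρ.real (CSLimit W) / Kseq k m := by
  rw [eq_div_iff (Nat.cast_pos.mpr (Kseq_pos hW.two_le m)).ne',
    hW.measureReal_eq_sum_shiftedCylinder_inter m measurableSet_CSLimit subset_rfl,
    Finset.sum_mul]
  refine Finset.sum_congr rfl fun v _ => ?_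
  simp only [Set.inter_eq_left.mpr (shiftedCylinder_subset_CSLimit _ _ _),
    measureReal_shiftedCylinder hinv, Finset.sum_const, Finset.card_range, nsmul_eq_mul, mul_comm]

lemma measureReal_cylinder_eq_sum (hW : OdometerBasedCS σ k W) [IsFiniteMeasure ρ]
    (hinv : ρ.map shift = ρ) {n : ℕ} {w : List σ} (hw : w ∈ W n) :
    ρ.real (cylinder W k n w) = ∑ v ∈ (hW.finite (n + 1)).toFinset,
      occCount w v * ρ.real (cylinder W k (n + 1) v) := by
  classical
  rw [hW.measureReal_eq_sum_shiftedCylinder_inter (n + 1) (measurableSet_cylinder n w)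
    fun _ hx => hx.1]
  refine Finset.sum_congr rfl fun v hv => ?_
  have hwlen : 0 < w.length := hW.length_eq n w hw ▸ Kseq_pos hW.two_le n
  rw [occCount_eq_card_filter hwlen, hW.length_eq _ v ((hW.finite _).mem_toFinset.mp hv),
    Finset.card_filter, Nat.cast_sum, Finset.sum_mul]
  refine Finset.sum_congr rfl fun p hp => ?_
  rw [hW.shiftedCylinder_inter_cylinder hw (Finset.mem_range.mp hp)]
  split_ifs <;> simp [measureReal_shiftedCylinder hinv]

lemma measureReal_CSLimit_div_le_measureReal_cylinder (hW : OdometerBasedCS σ k W)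
    [IsFiniteMeasure ρ] (hinv : ρ.map shift = ρ) {n : ℕ} {w : List σ} (hw : w ∈ W n) :
    ρ.real (CSLimit W) / Kseq k (n + 1) ≤ ρ.real (cylinder W k n w) := by
  rw [← hW.sum_measureReal_cylinder hinv, hW.measureReal_cylinder_eq_sum hinv hw]
  refine Finset.sum_le_sum fun v hv => le_mul_of_one_le_left measureReal_nonneg ?_
  obtain ⟨p, hp⟩ := hW.subword n w hw v ((hW.finite _).mem_toFinset.mp hv)
  exact Nat.one_le_cast.mpr (occCount_pos (hW.length_eq n w hw ▸ Kseq_pos hW.two_le n) hp)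

lemma measureReal_cylinder_lt (hW : OdometerBasedCS σ k W) [IsFiniteMeasure ρ]
    (hinv : ρ.map shift = ρ) (hlim : 0 < ρ.real (CSLimit W)) {n : ℕ} {d : ℝ}
    (hd : maxFreq k W n < d) {w : List σ} (hw : w ∈ W n) :
    ρ.real (cylinder W k n w) < d * ρ.real (CSLimit W) / Kseq k n := by
  have hK (m : ℕ) : (0 : ℝ) < Kseq k m := Nat.cast_pos.mpr (Kseq_pos hW.two_le m)
  have hocc : ∀ v ∈ (hW.finite (n + 1)).toFinset,
      (occCount w v : ℝ) < d * (Kseq k (n + 1) / Kseq k n) := fun v hv => by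
    have := (hW.Freq_le_maxFreq hw ((hW.finite _).mem_toFinset.mp hv)).trans_lt hd
    rwa [Freq, div_lt_iff₀ (div_pos (hK _) (hK _))] at this
  calc ρ.real (cylinder W k n w)
      = ∑ v ∈ (hW.finite (n + 1)).toFinset, occCount w v * ρ.real (cylinder W k (n + 1) v) :=
        hW.measureReal_cylinder_eq_sum hinv hw
    _ < d * (Kseq k (n + 1) / Kseq k n) *
          ∑ v ∈ (hW.finite (n + 1)).toFinset, ρ.real (cylinder W k (n + 1) v) :=
        sum_mul_lt_mul_sum hocc (fun _ _ => measureReal_nonneg)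
          (by rw [hW.sum_measureReal_cylinder hinv]; exact div_pos hlim (hK _))
    _ = d * ρ.real (CSLimit W) / Kseq k n := by
        rw [hW.sum_measureReal_cylinder hinv]
        field_simp [(hK (n + 1)).ne']

end OdometerBasedCS

end Mass

theorem small_word_property_cylinder_measures_general
    {α : Type} [Fintype α] [MeasurableSpace α] [DiscreteMeasurableSpace α]
    (k : ℕ → ℕ) (W : ℕ → Set (List α)) (hW : OdometerBasedCS α k W)
    (δ : ℕ → ℝ) (hδ1 : ∀ n, δ n < 1)
    (hswp : ∀ n, maxFreq k W n < δ n)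
    (ρ : Measure (ℤ → α)) (hprob : IsProbabilityMeasure ρ)
    (hinv : Measure.map shift ρ = ρ) (hsupp : ρ (CSLimit W) = 1) :
    ∀ n : ℕ, ∀ w ∈ W n, ∀ w' ∈ W (n + 1),
      (ρ (cylinder W k (n + 1) w')).toReal < δ (n + 1) / (Kseq k (n + 1) : ℝ) ∧
      δ (n + 1) / (Kseq k (n + 1) : ℝ) < (ρ (cylinder W k n w)).toReal := by
  intro n w hw w' hw'
  have hlim : ρ.real (CSLimit W) = 1 := by rw [measureReal_def, hsupp, ENNReal.toReal_one]
  constructor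
  · have := hW.measureReal_cylinder_lt hinv (hlim ▸ one_pos) (hswp (n + 1)) hw'
    rwa [hlim, mul_one] at this
  · calc δ (n + 1) / Kseq k (n + 1) < 1 / Kseq k (n + 1) :=
          div_lt_div_of_pos_right (hδ1 _) (Nat.cast_pos.mpr (Kseq_pos hW.two_le _))
      _ ≤ ρ.real (cylinder W k n w) :=
          hlim ▸ hW.measureReal_CSLimit_div_le_measureReal_cylinder hinv hw

/-- if an odometer based construction sequence has the small word property
with respect to `(δ_n)` with `0 < δ_n < 1` (i.e. `f_n < δ_n` for all `n`), then for every
shift-invariant Borel probability measure `ρ` on the limit, every `w ∈ W_n` and every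
`w' ∈ W_{n+1}` one has `ρ(⟨w'⟩) < δ_{n+1}/K_{n+1} < ρ(⟨w⟩)`. -/
theorem small_word_property_cylinder_measures
    {α : Type} [Fintype α] [MeasurableSpace α] [DiscreteMeasurableSpace α]
    (k : ℕ → ℕ) (W : ℕ → Set (List α)) (hW : OdometerBasedCS α k W)
    (δ : ℕ → ℝ) (hδ0 : ∀ n, 0 < δ n) (hδ1 : ∀ n, δ n < 1)
    (hswp : ∀ n, maxFreq k W n < δ n)
    (ρ : Measure (ℤ → α)) (hprob : IsProbabilityMeasure ρ)
    (hinv : Measure.map shift ρ = ρ) (hsupp : ρ (CSLimit W) = 1) :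
    ∀ n : ℕ, ∀ w ∈ W n, ∀ w' ∈ W (n + 1),
      (ρ (cylinder W k (n + 1) w')).toReal < δ (n + 1) / (Kseq k (n + 1) : ℝ) ∧
      δ (n + 1) / (Kseq k (n + 1) : ℝ) < (ρ (cylinder W k n w)).toReal :=
  small_word_property_cylinder_measures_general k W hW δ hδ1 hswp ρ hprob hinv hsupp

end OdoPaper
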